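/- Let μ be a real number with -π < μ < 0 and let a be a real number with a > 1/2. Then Γ(a+1) · Σ_{n∈ℤ} (2n+1)²π² / ( (2n+1)²π² + μ² )^{a+1} = Σ_{k=0}^∞ (-1)^k · ( 2·(1 - 2^{-2(a+k)}) · Γ(a+k+1) · π^{-2(a+k)} · ζ(2(a+k)) / k! ) · μ^{2k}, where both series converge absolutely. -/

import Mathlib

/-!
Expand each term by the binomial series in `μ² / ((2n+1)π)²`, which converges because
`|μ| < π ≤ |2n+1| π`; with `Γ(a+1) (a+1)_k = Γ(a+k+1)` the coefficient of `μ^{2k}` is a multiple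
of `|2n+1|^{-2(a+k)}`, and summing that over `n ∈ ℤ` gives `2 (1 - 2^{-s}) ζ(s)` with
`s = 2(a+k) > 1`. The double series is dominated by the product of the binomial series at
`-μ²/π²` and `∑ |2n+1|^{-2a}`, so the two summations may be interchanged.
-/

open Real

theorem Real.Gamma_add_nat_eq_mul_ascPochhammer {b : ℝ} (hb : 0 < b) (k : ℕ) :
    Gamma (b + k) = Gamma b * (ascPochhammer ℝ k).eval b := by
  induction k with
  | zero => simp
  | succ k ih =>
    rw [ascPochhammer_succ_eval, Nat.cast_succ, ← add_assoc, Gamma_add_one (by positivity), ih]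
    ring

theorem Ring.choose_neg_eq_ascPochhammer {R : Type*} [Field R] [CharZero R] (r : R) (k : ℕ) :
    Ring.choose (-r) k = (-1) ^ k * (ascPochhammer R k).eval r / k.factorial := by
  rw [Ring.choose_eq_smul]
  simp only [Polynomial.descPochhammer_smeval_eq_ascPochhammer,
    Polynomial.ascPochhammer_smeval_cast, Polynomial.ascPochhammer_smeval_eq_eval]
  rw [show -r - k + 1 = -(r + k - 1) by ring, ascPochhammer_eval_neg_eq_descPochhammer,
    descPochhammer_eval_eq_ascPochhammer, show r + k - 1 - k + 1 = r by ring, smul_eq_mul]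
  ring

theorem Real.hasSum_Gamma_add_nat_mul_pow {b x : ℝ} (hb : 0 < b) (hx : |x| < 1) :
    HasSum (fun k : ℕ => (-1) ^ k * Gamma (b + k) / k.factorial * x ^ k)
      (Gamma b * (1 + x) ^ (-b)) := by
  have h := (one_add_rpow_hasFPowerSeriesOnBall_zero (a := -b)).hasSum
    (y := x) (by simpa [← ofReal_norm] using hx)
  simp only [binomialSeries_apply, List.ofFn_const, List.prod_replicate, smul_eq_mul,
    zero_add] at h
  refine (h.mul_left (Gamma b)).congr_fun fun k => ?_
  rw [Ring.choose_neg_eq_ascPochhammer, Gamma_add_nat_eq_mul_ascPochhammer hb]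
  ring

theorem Real.hasSum_Gamma_mul_rpow_neg {a t y : ℝ} (ha : -1 < a) (ht : 0 < t) (hy : |y| < t ^ 2) :
    HasSum (fun k : ℕ => (-1) ^ k * Gamma (a + k + 1) / k.factorial * y ^ k * t ^ (-2 * (a + k)))
      (Gamma (a + 1) * (t ^ 2 / (t ^ 2 + y) ^ (a + 1))) := by
  have ht2 : 0 < t ^ 2 := by positivity
  have hx : |y / t ^ 2| < 1 := by rwa [abs_div, abs_of_pos ht2, div_lt_one ht2]
  have h1x : 0 < 1 + y / t ^ 2 := by linarith [neg_abs_le (y / t ^ 2)]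
  have hpow (k : ℕ) : t ^ (-2 * (a + k)) = t ^ (-2 * a) / (t ^ 2) ^ k := by
    rw [show -2 * (a + k) = -2 * a - (2 * k : ℕ) by push_cast; ring, rpow_sub ht, rpow_natCast,
      pow_mul]
  have hsum : t ^ 2 / (t ^ 2 + y) ^ (a + 1) = (1 + y / t ^ 2) ^ (-(a + 1)) * t ^ (-2 * a) := by
    rw [show t ^ 2 + y = t ^ 2 * (1 + y / t ^ 2) by field_simp, mul_rpow ht2.le h1x.le,
      rpow_neg h1x.le, ← rpow_natCast, ← rpow_mul ht.le, mul_add, mul_one, rpow_add ht,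
      show (-2 * a) = -(2 * a) by ring, rpow_neg ht.le]
    push_cast
    field_simp
  rw [hsum, ← mul_assoc]
  refine ((hasSum_Gamma_add_nat_mul_pow (by linarith) hx).mul_right _).congr_fun fun k => ?_
  rw [hpow, div_pow, add_right_comm]
  ring

theorem hasSum_one_div_two_mul_nat_add_one_cpow {s : ℂ} (hs : 1 < s.re) :
    HasSum (fun n : ℕ => 1 / (2 * n + 1 : ℂ) ^ s) ((1 - 2 ^ (-s)) * riemannZeta s) := by
  set f : ℕ → ℂ := fun n => 1 / (n + 1 : ℂ) ^ s
  have hf : HasSum f (riemannZeta s) := by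
    rw [zeta_eq_tsum_one_div_nat_add_one_cpow hs]
    refine Summable.hasSum ?_
    simpa [f] using (summable_nat_add_iff 1).2 (Complex.summable_one_div_nat_cpow.2 hs)
  have hodd : HasSum (fun n => f (2 * n + 1)) (2 ^ (-s) * riemannZeta s) := by
    refine (hf.mul_left _).congr_fun fun n => ?_
    have h2 : ((2 * n + 1 : ℕ) : ℂ) + 1 = ((2 : ℕ) : ℂ) * ((n + 1 : ℕ) : ℂ) := by push_cast; ring
    simp only [f, h2, Complex.natCast_mul_natCast_cpow, Complex.cpow_neg]
    push_cast
    field_simp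
  have heven := (hf.summable.comp_injective (mul_right_injective₀ two_ne_zero)).hasSum
  have hsplit := (heven.even_add_odd hodd).unique hf
  rw [show ∑' n, (f ∘ (2 * ·)) n = (1 - 2 ^ (-s)) * riemannZeta s by linear_combination hsplit]
    at heven
  exact heven.congr_fun fun n => by simp [f]

theorem hasSum_int_abs_two_mul_add_one_rpow_neg {s : ℝ} (hs : 1 < s) :
    HasSum (fun n : ℤ => ((|2 * (n : ℝ) + 1| ^ (-s) : ℝ) : ℂ))
      (((2 * (1 - 2 ^ (-s)) : ℝ) : ℂ) * riemannZeta s) := by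
  have h := hasSum_one_div_two_mul_nat_add_one_cpow (s := s) (by simpa using hs)
  have hterm (m : ℕ) : ((|2 * (m : ℝ) + 1| ^ (-s) : ℝ) : ℂ) = 1 / (2 * m + 1 : ℂ) ^ (s : ℂ) := by
    rw [abs_of_pos (by positivity), rpow_neg (by positivity), Complex.ofReal_inv,
      Complex.ofReal_cpow (by positivity), one_div]
    norm_cast
  have hpos : HasSum (fun n : ℕ => ((|2 * ((n : ℤ) : ℝ) + 1| ^ (-s) : ℝ) : ℂ))
      ((1 - 2 ^ (-(s : ℂ))) * riemannZeta s) :=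
    h.congr_fun fun n => by rw [Int.cast_natCast, hterm]
  have hneg : HasSum (fun n : ℕ => ((|2 * ((-(n + 1) : ℤ) : ℝ) + 1| ^ (-s) : ℝ) : ℂ))
      ((1 - 2 ^ (-(s : ℂ))) * riemannZeta s) :=
    h.congr_fun fun n => by
      rw [← hterm, show 2 * ((-(n + 1) : ℤ) : ℝ) + 1 = -(2 * n + 1) by push_cast; ring, abs_neg]
  have htwo : (((2 : ℝ) ^ (-s) : ℝ) : ℂ) = 2 ^ (-(s : ℂ)) := by
    simp [Complex.ofReal_cpow zero_le_two]
  rw [Complex.ofReal_mul, Complex.ofReal_sub, htwo]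
  push_cast
  rw [mul_assoc, two_mul]
  exact hpos.of_nat_of_neg_add_one hneg

noncomputable def expansionCoeff (a μ : ℝ) (k : ℕ) : ℝ :=
  (-1) ^ k * Gamma (a + k + 1) / k.factorial * μ ^ (2 * k) * π ^ (-2 * (a + k))

lemma one_le_abs_two_mul_add_one (n : ℤ) : (1 : ℝ) ≤ |2 * (n : ℝ) + 1| := by
  exact_mod_cast Int.one_le_abs (by omega : 2 * n + 1 ≠ 0)

section

variable {a μ : ℝ}

lemma hasSum_expansionCoeff_mul_abs_rpow (ha : -1 < a) (hμ : μ ^ 2 < π ^ 2) (n : ℤ) :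
    HasSum (fun k : ℕ => expansionCoeff a μ k * |2 * (n : ℝ) + 1| ^ (-2 * (a + k)))
      (Gamma (a + 1) * ((2 * (n : ℝ) + 1) ^ 2 * π ^ 2 /
        ((2 * (n : ℝ) + 1) ^ 2 * π ^ 2 + μ ^ 2) ^ (a + 1))) := by
  have hn := one_le_abs_two_mul_add_one n
  have hy : |μ ^ 2| < (|2 * (n : ℝ) + 1| * π) ^ 2 := by
    have : π ^ 2 ≤ |2 * (n : ℝ) + 1| ^ 2 * π ^ 2 :=
      le_mul_of_one_le_left (sq_nonneg π) (one_le_pow₀ hn)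
    rw [abs_of_nonneg (sq_nonneg μ), mul_pow]
    linarith
  have h := hasSum_Gamma_mul_rpow_neg ha (by positivity) hy
  rw [mul_pow, sq_abs] at h
  refine h.congr_fun fun k => ?_
  rw [expansionCoeff, mul_rpow (abs_nonneg _) pi_pos.le, pow_mul]
  ring

lemma summable_abs_expansionCoeff (ha : -1 < a) (hμ : μ ^ 2 < π ^ 2) :
    Summable fun k : ℕ => |expansionCoeff a μ k| := by
  -- the binomial expansion at `y = -μ²` has exactly the terms `|expansionCoeff a μ k|`
  have h := hasSum_Gamma_mul_rpow_neg ha pi_pos (y := -μ ^ 2) (by simpa using hμ)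
  refine h.summable.congr fun k => ?_
  have hΓ : 0 < Gamma (a + k + 1) := Gamma_pos_of_pos (by linarith [k.cast_nonneg (α := ℝ)])
  have habs : |expansionCoeff a μ k| =
      Gamma (a + k + 1) / k.factorial * (μ ^ 2) ^ k * π ^ (-2 * (a + k)) := by
    simp only [expansionCoeff, abs_mul, abs_div, abs_pow, abs_neg, abs_one, one_pow, one_mul,
      Nat.abs_cast, abs_of_pos hΓ, abs_of_pos (rpow_pos_of_pos pi_pos _), pow_mul, sq_abs]
  have hsign : (-1 : ℝ) ^ k * (-1) ^ k = 1 := by rw [← mul_pow]; norm_num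
  rw [habs, neg_pow (μ ^ 2)]
  linear_combination (Gamma (a + k + 1) / k.factorial * (μ ^ 2) ^ k * π ^ (-2 * (a + k))) * hsign

lemma summable_expansionCoeff_mul_abs_rpow (ha : 1 / 2 < a) (hμ : μ ^ 2 < π ^ 2) :
    Summable fun p : ℕ × ℤ => expansionCoeff a μ p.1 * |2 * (p.2 : ℝ) + 1| ^ (-2 * (a + p.1)) := by
  have hodd : Summable fun n : ℤ => |2 * (n : ℝ) + 1| ^ (-(2 * a)) :=
    Complex.summable_ofReal.mp
      (hasSum_int_abs_two_mul_add_one_rpow_neg (s := 2 * a) (by linarith)).summable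
  have hcoeff := summable_abs_expansionCoeff (a := a) (by linarith) hμ
  refine Summable.of_norm_bounded
    (hcoeff.mul_of_nonneg hodd (fun _ => abs_nonneg _) (fun _ => by positivity)) fun p => ?_
  have hexp : -2 * (a + p.1) ≤ -(2 * a) := by linarith [p.1.cast_nonneg (α := ℝ)]
  rw [norm_mul, Real.norm_eq_abs, Real.norm_eq_abs, abs_of_nonneg (rpow_nonneg (abs_nonneg _) _)]
  exact mul_le_mul_of_nonneg_left
    (rpow_le_rpow_of_exponent_le (one_le_abs_two_mul_add_one p.2) hexp) (abs_nonneg _)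

lemma hasSum_expansionCoeff_mul_riemannZeta (ha : 1 / 2 < a) (k : ℕ) :
    HasSum (fun n : ℤ => ((expansionCoeff a μ k * |2 * (n : ℝ) + 1| ^ (-2 * (a + k)) : ℝ) : ℂ))
      ((((-1 : ℝ) ^ k * (2 * (1 - (2 : ℝ) ^ (-2 * (a + (k : ℝ)))) *
          Real.Gamma (a + (k : ℝ) + 1) * π ^ (-2 * (a + (k : ℝ))) / (Nat.factorial k)) *
          μ ^ (2 * k) : ℝ) : ℂ) * riemannZeta ((2 * (a + (k : ℝ)) : ℝ) : ℂ)) := by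
  have h := (hasSum_int_abs_two_mul_add_one_rpow_neg (s := 2 * (a + k))
    (by linarith [k.cast_nonneg (α := ℝ)])).mul_left (expansionCoeff a μ k : ℂ)
  rw [← neg_mul] at h
  convert h.congr_fun (fun n => Complex.ofReal_mul _ _) using 1
  · rfl
  · rw [expansionCoeff]
    push_cast
    ring

end

theorem stmt13 (μ a : ℝ) (hμ₁ : -π < μ) (hμ₂ : μ < 0) (ha : a > 1/2) :
    Summable (fun n : ℤ => (2 * (n : ℝ) + 1) ^ 2 * π ^ 2 /
        ((2 * (n : ℝ) + 1) ^ 2 * π ^ 2 + μ ^ 2) ^ (a + 1)) ∧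
    Summable (fun k : ℕ =>
      (((-1 : ℝ) ^ k * (2 * (1 - (2 : ℝ) ^ (-2 * (a + (k : ℝ)))) *
          Real.Gamma (a + (k : ℝ) + 1) * π ^ (-2 * (a + (k : ℝ))) / (Nat.factorial k)) *
          μ ^ (2 * k) : ℝ) : ℂ) * riemannZeta ((2 * (a + (k : ℝ)) : ℝ) : ℂ)) ∧
    ((Real.Gamma (a + 1) *
        ∑' n : ℤ, (2 * (n : ℝ) + 1) ^ 2 * π ^ 2 /
          ((2 * (n : ℝ) + 1) ^ 2 * π ^ 2 + μ ^ 2) ^ (a + 1) : ℝ) : ℂ)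
      = ∑' k : ℕ,
          (((-1 : ℝ) ^ k * (2 * (1 - (2 : ℝ) ^ (-2 * (a + (k : ℝ)))) *
              Real.Gamma (a + (k : ℝ) + 1) * π ^ (-2 * (a + (k : ℝ))) / (Nat.factorial k)) *
              μ ^ (2 * k) : ℝ) : ℂ) * riemannZeta ((2 * (a + (k : ℝ)) : ℝ) : ℂ) := by
  have hμ : μ ^ 2 < π ^ 2 := by nlinarith
  set F : ℕ → ℤ → ℂ := fun k n =>
    ((expansionCoeff a μ k * |2 * (n : ℝ) + 1| ^ (-2 * (a + k)) : ℝ) : ℂ)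
  have hF : Summable (Function.uncurry F) :=
    Complex.summable_ofReal.mpr (summable_expansionCoeff_mul_abs_rpow ha hμ)
  have hcol (n : ℤ) := Complex.hasSum_ofReal.mpr
    (hasSum_expansionCoeff_mul_abs_rpow (by linarith) hμ n)
  have hrow := hasSum_expansionCoeff_mul_riemannZeta (μ := μ) ha
  refine ⟨?_, hF.prod.congr fun k => (hrow k).tsum_eq, ?_⟩
  · refine (summable_mul_left_iff (Gamma_pos_of_pos (by linarith : 0 < a + 1)).ne').mp ?_
    exact Complex.summable_ofReal.mp (hF.prod_symm.prod.congr fun n => (hcol n).tsum_eq)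
  · calc _ = ∑' n, ∑' k, F k n := by
          rw [← tsum_mul_left, Complex.ofReal_tsum]
          exact tsum_congr fun n => (hcol n).tsum_eq.symm
      _ = ∑' k, ∑' n, F k n := hF.tsum_comm
      _ = _ := tsum_congr fun k => (hrow k).tsum_eq
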